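/- Asymptotic variance of the quadratic variation of fractional Brownian motion, case H < 3/4. Let H ∈ (0, 3/4), let ρ(r) = (1/2)(|r+1|^{2H} + |r−1|^{2H} − 2|r|^{2H}) for r ∈ ℤ, and set σ_n² = 2 Σ_{|r|<n} (n − |r|) ρ(r)² for n ≥ 1. Then Σ_{r∈ℤ} ρ(r)² < ∞ and σ_n²/n → 2 Σ_{r∈ℤ} ρ(r)² as n → ∞. -/

import Mathlib

/-!
For `r ≥ 2`, `ρ(r)` is half the symmetric second difference of `x ↦ x ^ (2H)` at `r`, so two
applications of the mean value theorem give `ρ(r) = H(2H - 1) ξ ^ (2H - 2)` with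
`ξ ∈ (r - 1, r + 1)`. Hence `ρ(r)² = O(r ^ (4H - 4))`, which is summable for `H < 3/4`.
Then `σ_n² / n = 2 Σ_r max(0, 1 - |r|/n) ρ(r)²`, and dominated convergence for series, with
dominating series `Σ ρ(r)²`, lets `n → ∞` inside the sum.
-/

open Filter Real Finset

/-- The covariance function of the unit increments of fractional Brownian motion
with Hurst parameter `H`: `ρ(r) = (1/2)(|r+1|^{2H} + |r−1|^{2H} − 2|r|^{2H})`. -/
noncomputable def fbmRho (H : ℝ) (r : ℤ) : ℝ :=
  (1 / 2) * (|(r : ℝ) + 1| ^ (2 * H) + |(r : ℝ) - 1| ^ (2 * H) -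
    2 * |(r : ℝ)| ^ (2 * H))

/-- The variance `σ_n² = 2 Σ_{|r|<n} (n − |r|) ρ(r)²` of the quadratic variation
of fractional Brownian motion. -/
noncomputable def fbmSigmaSq (H : ℝ) (n : ℕ) : ℝ :=
  2 * ∑ r ∈ Finset.Ioo (-(n : ℤ)) (n : ℤ), ((n : ℝ) - |(r : ℝ)|) * (fbmRho H r) ^ 2

open Set in
theorem exists_sub_two_mul_add_eq_sq_mul {f f' f'' : ℝ → ℝ} {a h : ℝ} (hh : 0 < h)
    (hf : ∀ x ∈ Icc (a - h) (a + h), HasDerivAt f (f' x) x)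
    (hf' : ∀ x ∈ Ioo (a - h) (a + h), HasDerivAt f' (f'' x) x) :
    ∃ ξ ∈ Ioo (a - h) (a + h), f (a + h) - 2 * f a + f (a - h) = h ^ 2 * f'' ξ := by
  have hG : ∀ x ∈ Icc (a - h) a, HasDerivAt (fun y => f (y + h) - f y) (f' (x + h) - f' x) x :=
    fun x hx => by
      have h₁ := hf (x + h) ⟨by linarith [hx.1], by linarith [hx.2]⟩
      have h₂ := hf x ⟨hx.1, by linarith [hx.2]⟩
      exact (h₁.comp_add_const x h).sub h₂
  obtain ⟨c, hc, hc_eq⟩ := exists_hasDerivAt_eq_slope (fun y => f (y + h) - f y)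
    (fun x => f' (x + h) - f' x) (by linarith : a - h < a)
    (fun x hx => (hG x hx).continuousAt.continuousWithinAt)
    (fun x hx => hG x (Ioo_subset_Icc_self hx))
  have hIcc : Icc c (c + h) ⊆ Ioo (a - h) (a + h) :=
    Icc_subset_Ioo hc.1 (by linarith [hc.2])
  obtain ⟨ξ, hξ, hξ_eq⟩ := exists_hasDerivAt_eq_slope f' f'' (by linarith : c < c + h)
    (fun x hx => (hf' x (hIcc hx)).continuousAt.continuousWithinAt)
    (fun x hx => hf' x (hIcc (Ioo_subset_Icc_self hx)))
  refine ⟨ξ, hIcc (Ioo_subset_Icc_self hξ), ?_⟩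
  rw [hξ_eq, hc_eq, sub_add_cancel, sub_sub_cancel, add_sub_cancel_left]
  field_simp
  ring

theorem fbmRho_neg (H : ℝ) (r : ℤ) : fbmRho H (-r) = fbmRho H r := by
  simp only [fbmRho, Int.cast_neg, abs_neg]
  rw [show -(r : ℝ) + 1 = -((r : ℝ) - 1) by ring, show -(r : ℝ) - 1 = -((r : ℝ) + 1) by ring,
    abs_neg, abs_neg]
  ring

theorem exists_fbmRho_eq (H : ℝ) {r : ℤ} (hr : 2 ≤ r) :
    ∃ ξ ∈ Set.Ioo ((r : ℝ) - 1) (r + 1), fbmRho H r = H * (2 * H - 1) * ξ ^ (2 * H - 2) := by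
  have hr' : (2 : ℝ) ≤ r := by exact_mod_cast hr
  have hderiv (p : ℝ) {x : ℝ} (hx : 0 < x) :
      HasDerivAt (fun y : ℝ => y ^ p) (p * x ^ (p - 1)) x :=
    hasDerivAt_rpow_const (Or.inl hx.ne')
  obtain ⟨ξ, hξ, hξ_eq⟩ := exists_sub_two_mul_add_eq_sq_mul (a := (r : ℝ)) one_pos
    (fun x hx => hderiv (2 * H) (by linarith [hx.1]))
    (fun x hx => (hderiv (2 * H - 1) (by linarith [hx.1])).const_mul (2 * H))
  refine ⟨ξ, hξ, ?_⟩
  rw [fbmRho, abs_of_pos (by linarith), abs_of_pos (by linarith), abs_of_pos (by linarith),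
    show 2 * H - 2 = 2 * H - 1 - 1 by ring]
  linear_combination (1 / 2 : ℝ) * hξ_eq

theorem abs_fbmRho_le {H : ℝ} (hH : H ≤ 1) {r : ℤ} (hr : 2 ≤ r) :
    |fbmRho H r| ≤ |H * (2 * H - 1)| * ((r : ℝ) - 1) ^ (2 * H - 2) := by
  have hr' : (2 : ℝ) ≤ r := by exact_mod_cast hr
  obtain ⟨ξ, hξ, hξ_eq⟩ := exists_fbmRho_eq H hr
  rw [hξ_eq, abs_mul, abs_of_pos (rpow_pos_of_pos (show 0 < ξ by linarith [hξ.1]) _)]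
  exact mul_le_mul_of_nonneg_left
    (rpow_le_rpow_of_nonpos (by linarith) hξ.1.le (by linarith)) (abs_nonneg _)

theorem summable_fbmRho_sq {H : ℝ} (hH : H < 3 / 4) : Summable fun r : ℤ => fbmRho H r ^ 2 := by
  have hnat : Summable fun n : ℕ => fbmRho H n ^ 2 := by
    rw [← summable_nat_add_iff 2]
    have hp : Summable fun n : ℕ => ((n : ℝ) + 1) ^ (4 * H - 4) := by
      simpa using (summable_nat_add_iff 1).mpr (summable_nat_rpow.mpr (by linarith))
    refine .of_nonneg_of_le (fun n => sq_nonneg _) (fun n => ?_)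
      (hp.mul_left ((H * (2 * H - 1)) ^ 2))
    have hle := abs_fbmRho_le (by linarith : H ≤ 1) (r := n + 2) (by omega)
    rw [show ((n + 2 : ℤ) : ℝ) - 1 = n + 1 by push_cast; ring] at hle
    calc fbmRho H ↑(n + 2) ^ 2 = |fbmRho H (n + 2)| ^ 2 := by push_cast; rw [sq_abs]
      _ ≤ (|H * (2 * H - 1)| * ((n : ℝ) + 1) ^ (2 * H - 2)) ^ 2 := by gcongr
      _ = (H * (2 * H - 1)) ^ 2 * ((n : ℝ) + 1) ^ (4 * H - 4) := by
        rw [mul_pow, sq_abs, ← rpow_mul_natCast (by positivity)]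
        congr 2
        push_cast
        ring
  exact .of_nat_of_neg hnat (by simpa only [fbmRho_neg] using hnat)

theorem tendsto_sum_Ioo_sub_abs_mul_div {f : ℤ → ℝ} (hf : Summable f) :
    Tendsto (fun n : ℕ => (∑ r ∈ Ioo (-(n : ℤ)) n, ((n : ℝ) - |(r : ℝ)|) * f r) / n) atTop
      (nhds (∑' r, f r)) := by
  set w : ℕ → ℤ → ℝ := fun n r => max 0 (1 - |(r : ℝ)| / n)
  have hmem {n : ℕ} {r : ℤ} : r ∈ Ioo (-(n : ℤ)) n ↔ |(r : ℝ)| < n := by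
    rw [mem_Ioo, ← abs_lt, ← Int.cast_abs]
    norm_cast
  have hsum {n : ℕ} (hn : 1 ≤ n) :
      (∑ r ∈ Ioo (-(n : ℤ)) n, ((n : ℝ) - |(r : ℝ)|) * f r) / n = ∑' r, w n r * f r := by
    have hn : (0 : ℝ) < n := by exact_mod_cast hn
    rw [tsum_eq_sum fun r hr => ?_, sum_div]
    · refine sum_congr rfl fun r hr => ?_
      simp only [w]
      rw [max_eq_right (by rw [sub_nonneg, div_le_one hn]; exact (hmem.1 hr).le)]
      field_simp
    · simp only [w]
      rw [max_eq_left (by rw [sub_nonpos, le_div_iff₀ hn, one_mul]; exact not_lt.1 (mt hmem.2 hr)),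
        zero_mul]
  have hpt (r : ℤ) : Tendsto (fun n => w n r * f r) atTop (nhds (f r)) := by
    have h := ((tendsto_const_nhds (x := (0 : ℝ))).max (tendsto_const_nhds (x := (1 : ℝ)).sub
      (tendsto_const_div_atTop_nhds_zero_nat |(r : ℝ)|))).mul_const (f r)
    simpa using h
  have hdom (n : ℕ) (r : ℤ) : ‖w n r * f r‖ ≤ |f r| := by
    rw [norm_mul, Real.norm_eq_abs, abs_of_nonneg (le_max_left _ _)]
    refine mul_le_of_le_one_left (abs_nonneg _) (max_le zero_le_one ?_)
    exact sub_le_self _ (by positivity)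
  refine (tendsto_tsum_of_dominated_convergence hf.abs hpt (.of_forall hdom)).congr' ?_
  filter_upwards [eventually_ge_atTop 1] with n hn using (hsum hn).symm

theorem fbm_quadratic_variation_asymptotic_variance
    (H : ℝ) (h1 : H < 3 / 4) :
    Summable (fun r : ℤ => (fbmRho H r) ^ 2) ∧
    Tendsto (fun n : ℕ => fbmSigmaSq H n / (n : ℝ)) atTop
      (nhds (2 * ∑' r : ℤ, (fbmRho H r) ^ 2)) := by
  have hsum := summable_fbmRho_sq h1
  refine ⟨hsum, ?_⟩
  simpa only [fbmSigmaSq, mul_div_assoc] using (tendsto_sum_Ioo_sub_abs_mul_div hsum).const_mul 2
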